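/- arXiv:2203.03885 — 2 statements merged into one kernel-verified Lean document; each statement's English description precedes it below -/
import Mathlib

section
/- Let h : ℝ → ℝ, let f : ℝ → ℝ be strictly increasing, let D ≥ 0, and let μ₁ < μ₂ be real numbers. If s₁ ∈ [0, D] maximizes t ↦ h(t) − μ₁·f(t) over [0, D] and s₂ ∈ [0, D] maximizes t ↦ h(t) − μ₂·f(t) over [0, D], then s₂ ≤ s₁. -/
/-- Best-response form of the privacy-sensitivity part of Theorem 2: with `f`
strictly increasing and `μ₁ < μ₂`, any maximizer of `h - μ₂ • f` over `[0, D]`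
is at most any maximizer of `h - μ₁ • f` over `[0, D]`. -/
theorem best_response_antitone_in_privacy_sensitivity
    (h f : ℝ → ℝ) (hf : StrictMono f) (D : ℝ) (hD : 0 ≤ D)
    (μ₁ μ₂ : ℝ) (hμ : μ₁ < μ₂)
    (s₁ s₂ : ℝ) (hs₁ : s₁ ∈ Set.Icc 0 D) (hs₂ : s₂ ∈ Set.Icc 0 D)
    (hmax₁ : ∀ t ∈ Set.Icc 0 D, h t - μ₁ * f t ≤ h s₁ - μ₁ * f s₁)
    (hmax₂ : ∀ t ∈ Set.Icc 0 D, h t - μ₂ * f t ≤ h s₂ - μ₂ * f s₂) :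
    s₂ ≤ s₁ := by
  by_contra hlt
  push_neg at hlt
  have h1 := hmax₁ s₂ hs₂
  have h2 := hmax₂ s₁ hs₁
  have hfe : f s₁ < f s₂ := hf hlt
  nlinarith [mul_pos (sub_pos.mpr hμ) (sub_pos.mpr hfe)]
end

section
/- Consider the N-player data contribution game where client n's payoff given profile s is U_n(s) = h_n(s) − μ_n·f(s_n) with f : ℝ → ℝ strictly increasing, and strategies lie in [0, D_n]. Let μ_n < μ'_n and suppose s* is a Nash equilibrium of the game with privacy sensitivity μ_n for client n, s*' is a Nash equilibrium of the game with privacy sensitivity μ'_n for client n (all other clients' sensitivities unchanged), and the other clients' equilibrium strategies coincide: s*'_k = s*_k for all k ≠ n. Then s*'_n ≤ s*_n. -/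
/-- Theorem 2 of the paper (privacy-sensitivity part) at the equilibrium
level: in the data contribution game with payoffs
`U n s = h n s - μ n * f (s n)` (`f` strictly increasing), if `s` is a Nash
equilibrium under sensitivities `μ`, `s'` is a Nash equilibrium under
sensitivities `μ'` where only client `n`'s sensitivity increased
(`μ n < μ' n`, `μ' k = μ k` for `k ≠ n`), and the other clients' equilibrium
strategies coincide, then client `n`'s equilibrium contribution does not
increase. -/
theorem equilibrium_contribution_antitone_in_privacy_sensitivity
    (N : ℕ) (n : Fin N) (D : Fin N → ℝ) (hD : ∀ k, 0 ≤ D k)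
    (h : Fin N → (Fin N → ℝ) → ℝ) (f : ℝ → ℝ) (hf : StrictMono f)
    (μ μ' : Fin N → ℝ) (hμn : μ n < μ' n) (hμk : ∀ k, k ≠ n → μ' k = μ k)
    (s s' : Fin N → ℝ)
    (hs : ∀ k, s k ∈ Set.Icc 0 (D k)) (hs' : ∀ k, s' k ∈ Set.Icc 0 (D k))
    (hNE : ∀ k, ∀ t ∈ Set.Icc 0 (D k),
      h k (Function.update s k t) - μ k * f t ≤ h k s - μ k * f (s k))
    (hNE' : ∀ k, ∀ t ∈ Set.Icc 0 (D k),
      h k (Function.update s' k t) - μ' k * f t ≤ h k s' - μ' k * f (s' k))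
    (hothers : ∀ k, k ≠ n → s' k = s k) :
    s' n ≤ s n := by
  have hup1 : Function.update s n (s' n) = s' := by
    funext k
    by_cases hk : k = n
    · subst hk; simp
    · simp [Function.update_of_ne hk, hothers k hk]
  have hup2 : Function.update s' n (s n) = s := by
    funext k
    by_cases hk : k = n
    · subst hk; simp
    · simp [Function.update_of_ne hk, hothers k hk]
  have h1 := hNE n (s' n) (hs' n)
  have h2 := hNE' n (s n) (hs n)
  rw [hup1] at h1
  rw [hup2] at h2
  have key : (μ' n - μ n) * (f (s' n) - f (s n)) ≤ 0 := by nlinarith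
  have hfle : f (s' n) ≤ f (s n) := by nlinarith
  exact le_of_not_gt fun hl => absurd (hf hl) (not_lt.mpr hfle)
end
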